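/- arXiv:math/0611345 — 5 statements merged into one kernel-verified Lean document; each statement's English description precedes it below -/
import Mathlib

section
/- Let V be a finite-dimensional real inner product space, b ∈ V with ‖b‖ = 1, g ∈ ℝ with |g| < 2, h = √(1 − g²/4). For y ∈ V put q(y) = √(‖y‖² − ⟨b,y⟩²), v(y) = y − ⟨b,y⟩b, A(y) = ⟨b,y⟩ + (g/2)q(y), B(y) = ⟨b,y⟩² + g⟨b,y⟩q(y) + q(y)², t(y) = y + (g/2)(q(y)·b + (⟨b,y⟩/q(y))·v(y)), and λ(y₁,y₂) = (A(y₁)A(y₂) + h²(⟨y₁,y₂⟩ − ⟨b,y₁⟩⟨b,y₂⟩))/√(B(y₁)B(y₂)). Then for y₁ with q(y₁) > 0 and nonzero y₂, the function y ↦ λ(y, y₂) is differentiable at y₁ and its derivative applied to w ∈ V equals [(⟨b,w⟩ + (g/2)⟨v(y₁),w⟩/q(y₁))·A(y₂) + h²⟨v(y₂),w⟩]/√(B(y₁)B(y₂)) − λ(y₁,y₂)·⟨t(y₁),w⟩/B(y₁). -/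
open scoped InnerProductSpace

/-- In the Finsleroid setting, for `y₁` with `q(y₁) > 0` and nonzero `y₂`,
the function `y ↦ λ(y, y₂)` is differentiable at `y₁` and its derivative applied to
`w` equals
`[(⟨b,w⟩ + (g/2)⟨v(y₁),w⟩/q(y₁))·A(y₂) + h²⟨v(y₂),w⟩]/√(B(y₁)B(y₂))
  − λ(y₁,y₂)·⟨t(y₁),w⟩/B(y₁)`. -/
theorem finsleroid_lambda_first_derivative
    {V : Type*} [NormedAddCommGroup V] [InnerProductSpace ℝ V] [FiniteDimensional ℝ V]
    (b : V) (hb : ‖b‖ = 1) (g h : ℝ) (hg : |g| < 2)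
    (hh : h = Real.sqrt (1 - g ^ 2 / 4))
    (q A B : V → ℝ) (v t : V → V) (lam : V → V → ℝ)
    (hq : ∀ y : V, q y = Real.sqrt (‖y‖ ^ 2 - ⟪b, y⟫_ℝ ^ 2))
    (hv : ∀ y : V, v y = y - ⟪b, y⟫_ℝ • b)
    (hA : ∀ y : V, A y = ⟪b, y⟫_ℝ + (g / 2) * q y)
    (hB : ∀ y : V, B y = ⟪b, y⟫_ℝ ^ 2 + g * ⟪b, y⟫_ℝ * q y + q y ^ 2)
    (ht : ∀ y : V, t y = y + (g / 2) • (q y • b + (⟪b, y⟫_ℝ / q y) • v y))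
    (hlam : ∀ y₁ y₂ : V, y₁ ≠ 0 → y₂ ≠ 0 →
      lam y₁ y₂ = (A y₁ * A y₂ + h ^ 2 * (⟪y₁, y₂⟫_ℝ - ⟪b, y₁⟫_ℝ * ⟪b, y₂⟫_ℝ))
        / Real.sqrt (B y₁ * B y₂)) :
    ∀ y₁ y₂ : V, 0 < q y₁ → y₂ ≠ 0 →
      DifferentiableAt ℝ (fun y => lam y y₂) y₁ ∧
      ∀ w : V,
        fderiv ℝ (fun y => lam y y₂) y₁ w
          = ((⟪b, w⟫_ℝ + (g / 2) * ⟪v y₁, w⟫_ℝ / q y₁) * A y₂ + h ^ 2 * ⟪v y₂, w⟫_ℝ)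
              / Real.sqrt (B y₁ * B y₂)
            - lam y₁ y₂ * ⟪t y₁, w⟫_ℝ / B y₁ := by
  intro y₁ y₂ hq1 hy2
  have hg2 : g ^ 2 < 4 := by nlinarith [sq_abs g, abs_nonneg g]
  have hqnn : ∀ y : V, 0 ≤ q y := fun y => (hq y) ▸ Real.sqrt_nonneg _
  have hP1 : 0 < ‖y₁‖ ^ 2 - ⟪b, y₁⟫_ℝ ^ 2 := by
    by_contra hle
    push_neg at hle
    rw [hq y₁, Real.sqrt_eq_zero'.mpr hle] at hq1
    exact lt_irrefl 0 hq1
  have hy1 : y₁ ≠ 0 := by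
    rintro rfl
    simp at hP1
  have hq1sq : q y₁ ^ 2 = ‖y₁‖ ^ 2 - ⟪b, y₁⟫_ℝ ^ 2 := by
    rw [hq]; exact Real.sq_sqrt hP1.le
  have hq1ne : q y₁ ≠ 0 := ne_of_gt hq1
  have hB1 : 0 < B y₁ := by
    rw [hB]
    have key : 0 < (4 - g ^ 2) * (q y₁ * q y₁) :=
      mul_pos (by linarith) (mul_pos hq1 hq1)
    nlinarith [sq_nonneg (⟪b, y₁⟫_ℝ + g * q y₁ / 2), key]
  have hB2 : 0 < B y₂ := by
    rcases (hqnn y₂).lt_or_eq with h2 | h2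
    · rw [hB]
      have key : 0 < (4 - g ^ 2) * (q y₂ * q y₂) :=
        mul_pos (by linarith) (mul_pos h2 h2)
      nlinarith [sq_nonneg (⟪b, y₂⟫_ℝ + g * q y₂ / 2), key]
    · have hcs : ⟪b, y₂⟫_ℝ ^ 2 ≤ ‖y₂‖ ^ 2 := by
        have h1 := abs_real_inner_le_norm b y₂
        rw [hb, one_mul] at h1
        nlinarith [abs_nonneg ⟪b, y₂⟫_ℝ, sq_abs ⟪b, y₂⟫_ℝ]
      have hnorm : 0 < ‖y₂‖ := norm_pos_iff.mpr hy2
      have hle : ‖y₂‖ ^ 2 - ⟪b, y₂⟫_ℝ ^ 2 ≤ 0 := by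
        by_contra hpos
        push_neg at hpos
        rw [hq y₂] at h2
        exact absurd h2.symm (ne_of_gt (Real.sqrt_pos.mpr hpos))
      rw [hB, ← h2]
      nlinarith
  have hBB : 0 < B y₁ * B y₂ := mul_pos hB1 hB2
  have hsD : 0 < Real.sqrt (B y₁ * B y₂) := Real.sqrt_pos.mpr hBB
  -- derivative chain
  have d_b := (hasFDerivAt_const b y₁).inner ℝ (hasFDerivAt_id y₁)
  have d_ns := (hasFDerivAt_id y₁).norm_sq
  have d_b2 := (hasDerivAt_pow 2 (⟪b, y₁⟫_ℝ)).comp_hasFDerivAt y₁ d_b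
  have d_P := d_ns.sub d_b2
  have d_q := d_P.sqrt hP1.ne'
  have d_q2 := (hasDerivAt_pow 2 (Real.sqrt (‖y₁‖ ^ 2 - ⟪b, y₁⟫_ℝ ^ 2))).comp_hasFDerivAt y₁ d_q
  have d_A := d_b.add (d_q.const_mul (g / 2))
  have d_Bq := (d_b2.add ((d_b.const_mul g).mul d_q)).add d_q2
  have d_BB := d_Bq.mul_const (B y₂)
  have hBval : ⟪b, y₁⟫_ℝ ^ 2 + g * ⟪b, y₁⟫_ℝ * Real.sqrt (‖y₁‖ ^ 2 - ⟪b, y₁⟫_ℝ ^ 2) +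
      Real.sqrt (‖y₁‖ ^ 2 - ⟪b, y₁⟫_ℝ ^ 2) ^ 2 = B y₁ := by
    rw [hB y₁, hq y₁]
  have hDne : (⟪b, y₁⟫_ℝ ^ 2 + g * ⟪b, y₁⟫_ℝ * Real.sqrt (‖y₁‖ ^ 2 - ⟪b, y₁⟫_ℝ ^ 2) +
      Real.sqrt (‖y₁‖ ^ 2 - ⟪b, y₁⟫_ℝ ^ 2) ^ 2) * B y₂ ≠ 0 := by
    rw [hBval]; exact hBB.ne'
  have d_D := d_BB.sqrt hDne
  have hsne : Real.sqrt ((⟪b, y₁⟫_ℝ ^ 2 + g * ⟪b, y₁⟫_ℝ * Real.sqrt (‖y₁‖ ^ 2 - ⟪b, y₁⟫_ℝ ^ 2) +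
      Real.sqrt (‖y₁‖ ^ 2 - ⟪b, y₁⟫_ℝ ^ 2) ^ 2) * B y₂) ≠ 0 := by
    rw [hBval]; exact hsD.ne'
  have d_inv := (hasDerivAt_inv hsne).comp_hasFDerivAt y₁ d_D
  have d_i2 := (hasFDerivAt_id y₁).inner ℝ (hasFDerivAt_const y₂ y₁)
  have d_N := (d_A.mul_const (A y₂)).add ((d_i2.sub (d_b.mul_const (⟪b, y₂⟫_ℝ))).const_mul (h ^ 2))
  have d_F := d_N.mul d_inv
  have hqcont : Continuous q := by
    have hfn : q = fun y : V => Real.sqrt (‖y‖ ^ 2 - ⟪b, y⟫_ℝ ^ 2) := funext hq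
    rw [hfn]
    exact Real.continuous_sqrt.comp
      ((continuous_norm.pow 2).sub ((Continuous.inner continuous_const continuous_id).pow 2))
  have hev : (fun y => lam y y₂) =ᶠ[nhds y₁] (fun y : V =>
      ((⟪b, y⟫_ℝ + g / 2 * Real.sqrt (‖y‖ ^ 2 - ⟪b, y⟫_ℝ ^ 2)) * A y₂ +
        h ^ 2 * (⟪y, y₂⟫_ℝ - ⟪b, y⟫_ℝ * ⟪b, y₂⟫_ℝ)) *
      (Real.sqrt ((⟪b, y⟫_ℝ ^ 2 + g * ⟪b, y⟫_ℝ * Real.sqrt (‖y‖ ^ 2 - ⟪b, y⟫_ℝ ^ 2) +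
          Real.sqrt (‖y‖ ^ 2 - ⟪b, y⟫_ℝ ^ 2) ^ 2) * B y₂))⁻¹) := by
    have hq_pos : ∀ᶠ y in nhds y₁, 0 < q y :=
      (hqcont.tendsto y₁).eventually (eventually_gt_nhds hq1)
    filter_upwards [hq_pos] with y hy
    have hyne : y ≠ 0 := by
      rintro rfl
      rw [hq] at hy
      simp at hy
    rw [hlam y y₂ hyne hy2, hA y, hB y, hq y, div_eq_mul_inv]
  have dF := d_F.congr_of_eventuallyEq hev
  refine ⟨dF.differentiableAt, fun w => ?_⟩
  rw [dF.fderiv]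
  simp only [ContinuousLinearMap.add_apply, ContinuousLinearMap.smul_apply,
    ContinuousLinearMap.sub_apply, ContinuousLinearMap.comp_apply,
    ContinuousLinearMap.prod_apply, fderivInnerCLM_apply, ContinuousLinearMap.coe_id',
    id_eq, ContinuousLinearMap.zero_apply, smul_eq_mul, ContinuousLinearMap.id_apply,
    inner_zero_left, inner_zero_right, add_zero, zero_add, pow_one, Nat.cast_ofNat,
    ContinuousLinearMap.coe_smul', Pi.smul_apply, Function.comp_apply, Function.comp,
    innerSL_apply_apply, nsmul_eq_mul, Nat.cast_ofNat]
  norm_num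
  rw [← hq y₁, ← hB y₁, Real.sq_sqrt hBB.le]
  rw [hlam y₁ y₂ hy1 hy2, ht y₁, hv y₁, hv y₂, hA y₁, real_inner_comm y₂ w]
  simp only [inner_add_left, inner_sub_left, real_inner_smul_left]
  have hsne' : Real.sqrt (B y₁ * B y₂) ≠ 0 := hsD.ne'
  field_simp
  ring
end

section
/- Let V be a finite-dimensional real inner product space, b ∈ V with ‖b‖ = 1, g ∈ ℝ with |g| < 2, h = √(1 − g²/4), and let q, A, B, λ be as in the Finsleroid setting. Then for y₁ with q(y₁) > 0 and nonzero y₂, the derivative of y ↦ λ(y, y₂) at y₁ applied to the vector y₁ itself is zero; symmetrically, for y₂ with q(y₂) > 0 and nonzero y₁, the derivative of y ↦ λ(y₁, y) at y₂ applied to y₂ is zero. -/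
open scoped InnerProductSpace

/-!
Euler's relation for a function `f` invariant under positive dilations: along the ray
`t ↦ t • y` the function is constant, so its derivative at `t = 1`, which is `f' y y`, vanishes
(and where `f` is not differentiable, `fderiv` is `0` by convention).
The Finsleroid quantities `q`, `A` are positively homogeneous of degree one and `B` of degree two,
so numerator and denominator of `λ` both scale by `t` when one argument is scaled by `t > 0`.
-/

theorem fderiv_apply_self_eq_zero_of_smul_invariant
    {E F : Type*} [NormedAddCommGroup E] [NormedSpace ℝ E] [NormedAddCommGroup F]
    [NormedSpace ℝ F] {f : E → F} {y : E} (hf : ∀ t : ℝ, 0 < t → f (t • y) = f y) :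
    fderiv ℝ f y y = 0 := by
  by_cases hd : DifferentiableAt ℝ f y
  · have hray : HasDerivAt (fun t : ℝ => t • y) y 1 := by
      simpa using (hasDerivAt_id (1 : ℝ)).smul_const y
    have hchain : HasDerivAt (fun t : ℝ => f (t • y)) (fderiv ℝ f y y) 1 := by
      have hf' : HasFDerivAt f (fderiv ℝ f y) ((1 : ℝ) • y) := by
        rw [one_smul]
        exact hd.hasFDerivAt
      exact hf'.comp_hasDerivAt 1 hray
    have hconst : (fun t : ℝ => f (t • y)) =ᶠ[nhds 1] fun _ => f y := by
      filter_upwards [Ioi_mem_nhds one_pos] with t ht using hf t ht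
    exact hchain.unique ((hasDerivAt_const (1 : ℝ) (f y)).congr_of_eventuallyEq hconst)
  · simp [fderiv_zero_of_not_differentiableAt hd]

noncomputable section

namespace Finsleroid

variable {V : Type*} [NormedAddCommGroup V] [InnerProductSpace ℝ V] (b : V) (g h : ℝ)

def q (y : V) : ℝ := √(‖y‖ ^ 2 - ⟪b, y⟫_ℝ ^ 2)

def A (y : V) : ℝ := ⟪b, y⟫_ℝ + (g / 2) * q b y

def B (y : V) : ℝ := ⟪b, y⟫_ℝ ^ 2 + g * ⟪b, y⟫_ℝ * q b y + q b y ^ 2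

def lam (y₁ y₂ : V) : ℝ :=
  (A b g y₁ * A b g y₂ + h ^ 2 * (⟪y₁, y₂⟫_ℝ - ⟪b, y₁⟫_ℝ * ⟪b, y₂⟫_ℝ)) / √(B b g y₁ * B b g y₂)

variable {b g h}

theorem q_zero : q b (0 : V) = 0 := by
  simp [q]

theorem ne_zero_of_q_pos {y : V} (hy : 0 < q b y) : y ≠ 0 := by
  rintro rfl
  exact hy.ne' q_zero

theorem q_smul {t : ℝ} (ht : 0 ≤ t) (y : V) : q b (t • y) = t * q b y := by
  have hrad : ‖t • y‖ ^ 2 - ⟪b, t • y⟫_ℝ ^ 2 = t ^ 2 * (‖y‖ ^ 2 - ⟪b, y⟫_ℝ ^ 2) := by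
    rw [norm_smul, real_inner_smul_right, Real.norm_eq_abs, mul_pow, sq_abs]
    ring
  rw [q, q, hrad, Real.sqrt_mul (sq_nonneg t), Real.sqrt_sq ht]

theorem A_smul {t : ℝ} (ht : 0 ≤ t) (y : V) : A b g (t • y) = t * A b g y := by
  rw [A, A, q_smul ht, real_inner_smul_right]
  ring

theorem B_smul {t : ℝ} (ht : 0 ≤ t) (y : V) : B b g (t • y) = t ^ 2 * B b g y := by
  rw [B, B, q_smul ht, real_inner_smul_right]
  ring

theorem lam_comm (y₁ y₂ : V) : lam b g h y₁ y₂ = lam b g h y₂ y₁ := by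
  rw [lam, lam, real_inner_comm y₁ y₂]
  ring_nf

theorem lam_smul_left {t : ℝ} (ht : 0 < t) (y₁ y₂ : V) :
    lam b g h (t • y₁) y₂ = lam b g h y₁ y₂ := by
  have hnum : A b g (t • y₁) * A b g y₂ + h ^ 2 * (⟪t • y₁, y₂⟫_ℝ - ⟪b, t • y₁⟫_ℝ * ⟪b, y₂⟫_ℝ)
      = t * (A b g y₁ * A b g y₂ + h ^ 2 * (⟪y₁, y₂⟫_ℝ - ⟪b, y₁⟫_ℝ * ⟪b, y₂⟫_ℝ)) := by
    rw [A_smul ht.le, real_inner_smul_left, real_inner_smul_right]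
    ring
  have hden : √(B b g (t • y₁) * B b g y₂) = t * √(B b g y₁ * B b g y₂) := by
    rw [B_smul ht.le, mul_assoc, Real.sqrt_mul (sq_nonneg t), Real.sqrt_sq ht.le]
  rw [lam, lam, hnum, hden, mul_div_mul_left _ _ ht.ne']

theorem lam_smul_right {t : ℝ} (ht : 0 < t) (y₁ y₂ : V) :
    lam b g h y₁ (t • y₂) = lam b g h y₁ y₂ := by
  rw [lam_comm, lam_smul_left ht, lam_comm]

end Finsleroid

end

open Finsleroid in
theorem finsleroid_lambda_euler_contractions_general
    {V : Type*} [NormedAddCommGroup V] [InnerProductSpace ℝ V]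
    (b : V) (g h : ℝ)
    (q A B : V → ℝ) (lam : V → V → ℝ)
    (hq : ∀ y : V, q y = Real.sqrt (‖y‖ ^ 2 - ⟪b, y⟫_ℝ ^ 2))
    (hA : ∀ y : V, A y = ⟪b, y⟫_ℝ + (g / 2) * q y)
    (hB : ∀ y : V, B y = ⟪b, y⟫_ℝ ^ 2 + g * ⟪b, y⟫_ℝ * q y + q y ^ 2)
    (hlam : ∀ y₁ y₂ : V, y₁ ≠ 0 → y₂ ≠ 0 →
      lam y₁ y₂ = (A y₁ * A y₂ + h ^ 2 * (⟪y₁, y₂⟫_ℝ - ⟪b, y₁⟫_ℝ * ⟪b, y₂⟫_ℝ))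
        / Real.sqrt (B y₁ * B y₂)) :
    (∀ y₁ y₂ : V, 0 < q y₁ → y₂ ≠ 0 → fderiv ℝ (fun y => lam y y₂) y₁ y₁ = 0)
      ∧ (∀ y₁ y₂ : V, y₁ ≠ 0 → 0 < q y₂ → fderiv ℝ (fun y => lam y₁ y) y₂ y₂ = 0) := by
  obtain rfl : q = Finsleroid.q b := funext hq
  obtain rfl : A = Finsleroid.A b g := funext hA
  obtain rfl : B = Finsleroid.B b g := funext hB
  replace hlam : ∀ y₁ y₂ : V, y₁ ≠ 0 → y₂ ≠ 0 → lam y₁ y₂ = Finsleroid.lam b g h y₁ y₂ := hlam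
  refine ⟨fun y₁ y₂ hq₁ hy₂ => ?_, fun y₁ y₂ hy₁ hq₂ => ?_⟩
  · have hy₁ := ne_zero_of_q_pos hq₁
    refine fderiv_apply_self_eq_zero_of_smul_invariant fun t ht => ?_
    rw [hlam _ _ (smul_ne_zero ht.ne' hy₁) hy₂, hlam _ _ hy₁ hy₂, lam_smul_left ht]
  · have hy₂ := ne_zero_of_q_pos hq₂
    refine fderiv_apply_self_eq_zero_of_smul_invariant fun t ht => ?_
    rw [hlam _ _ hy₁ (smul_ne_zero ht.ne' hy₂), hlam _ _ hy₁ hy₂, lam_smul_right ht]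

/-- In the Finsleroid setting, the derivative of `y ↦ λ(y, y₂)` at `y₁`
applied to `y₁` itself vanishes, and symmetrically the derivative of `y ↦ λ(y₁, y)` at
`y₂` applied to `y₂` vanishes (positive homogeneity of degree zero of `λ` in each
argument). -/
theorem finsleroid_lambda_euler_contractions
    {V : Type*} [NormedAddCommGroup V] [InnerProductSpace ℝ V] [FiniteDimensional ℝ V]
    (b : V) (hb : ‖b‖ = 1) (g h : ℝ) (hg : |g| < 2)
    (hh : h = Real.sqrt (1 - g ^ 2 / 4))
    (q A B : V → ℝ) (lam : V → V → ℝ)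
    (hq : ∀ y : V, q y = Real.sqrt (‖y‖ ^ 2 - ⟪b, y⟫_ℝ ^ 2))
    (hA : ∀ y : V, A y = ⟪b, y⟫_ℝ + (g / 2) * q y)
    (hB : ∀ y : V, B y = ⟪b, y⟫_ℝ ^ 2 + g * ⟪b, y⟫_ℝ * q y + q y ^ 2)
    (hlam : ∀ y₁ y₂ : V, y₁ ≠ 0 → y₂ ≠ 0 →
      lam y₁ y₂ = (A y₁ * A y₂ + h ^ 2 * (⟪y₁, y₂⟫_ℝ - ⟪b, y₁⟫_ℝ * ⟪b, y₂⟫_ℝ))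
        / Real.sqrt (B y₁ * B y₂)) :
    (∀ y₁ y₂ : V, 0 < q y₁ → y₂ ≠ 0 → fderiv ℝ (fun y => lam y y₂) y₁ y₁ = 0)
      ∧ (∀ y₁ y₂ : V, y₁ ≠ 0 → 0 < q y₂ → fderiv ℝ (fun y => lam y₁ y) y₂ y₂ = 0) :=
  finsleroid_lambda_euler_contractions_general b g h q A B lam hq hA hB hlam
end

section
/- Let V be a finite-dimensional real inner product space, b ∈ V with ‖b‖ = 1, g ∈ ℝ with |g| < 2, h = √(1 − g²/4), and let q, A, B, λ be as in the Finsleroid setting. Then for every y with q(y) > 0, both partial derivatives of λ vanish at the diagonal point (y, y): the derivative of y₁ ↦ λ(y₁, y) at y₁ = y is the zero functional, and the derivative of y₂ ↦ λ(y, y₂) at y₂ = y is the zero functional. -/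
open scoped InnerProductSpace

/-- In the Finsleroid setting, both partial derivatives of `λ` vanish at
a diagonal point `(y, y)` with `q(y) > 0`: the derivative of `y₁ ↦ λ(y₁, y)` at
`y₁ = y` is the zero functional, and the derivative of `y₂ ↦ λ(y, y₂)` at `y₂ = y` is
the zero functional. -/
theorem finsleroid_lambda_diagonal_derivatives_vanish
    {V : Type*} [NormedAddCommGroup V] [InnerProductSpace ℝ V] [FiniteDimensional ℝ V]
    (b : V) (hb : ‖b‖ = 1) (g h : ℝ) (hg : |g| < 2)
    (hh : h = Real.sqrt (1 - g ^ 2 / 4))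
    (q A B : V → ℝ) (lam : V → V → ℝ)
    (hq : ∀ y : V, q y = Real.sqrt (‖y‖ ^ 2 - ⟪b, y⟫_ℝ ^ 2))
    (hA : ∀ y : V, A y = ⟪b, y⟫_ℝ + (g / 2) * q y)
    (hB : ∀ y : V, B y = ⟪b, y⟫_ℝ ^ 2 + g * ⟪b, y⟫_ℝ * q y + q y ^ 2)
    (hlam : ∀ y₁ y₂ : V, y₁ ≠ 0 → y₂ ≠ 0 →
      lam y₁ y₂ = (A y₁ * A y₂ + h ^ 2 * (⟪y₁, y₂⟫_ℝ - ⟪b, y₁⟫_ℝ * ⟪b, y₂⟫_ℝ))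
        / Real.sqrt (B y₁ * B y₂)) :
    ∀ y : V, 0 < q y →
      fderiv ℝ (fun y₁ => lam y₁ y) y = 0 ∧ fderiv ℝ (fun y₂ => lam y y₂) y = 0 := by
  intro y hqy
  have hg2 : (0:ℝ) < 1 - g ^ 2 / 4 := by
    have := sq_abs g
    nlinarith [abs_nonneg g]
  have hh2 : h ^ 2 = 1 - g ^ 2 / 4 := by
    rw [hh]; exact Real.sq_sqrt hg2.le
  have hhpos : 0 < h := by
    rw [hh]; exact Real.sqrt_pos.mpr hg2
  -- radicand of q is nonnegative
  have hrad : ∀ z : V, 0 ≤ ‖z‖ ^ 2 - ⟪b, z⟫_ℝ ^ 2 := by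
    intro z
    have h1 := abs_real_inner_le_norm b z
    have h2 : |⟪b, z⟫_ℝ| ^ 2 = ⟪b, z⟫_ℝ ^ 2 := sq_abs _
    rw [hb, one_mul] at h1
    nlinarith [abs_nonneg (⟪b, z⟫_ℝ), norm_nonneg z]
  have hq0 : ∀ z : V, 0 ≤ q z := by intro z; rw [hq]; exact Real.sqrt_nonneg _
  have hqsq : ∀ z : V, q z ^ 2 = ‖z‖ ^ 2 - ⟪b, z⟫_ℝ ^ 2 := by
    intro z; rw [hq]; exact Real.sq_sqrt (hrad z)
  -- q z is the norm of the projection of z onto the orthogonal complement of b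
  have hqnorm : ∀ z : V, q z = ‖z - ⟪b, z⟫_ℝ • b‖ := by
    intro z
    have hexp : ‖z - ⟪b, z⟫_ℝ • b‖ ^ 2 = ‖z‖ ^ 2 - ⟪b, z⟫_ℝ ^ 2 := by
      rw [← real_inner_self_eq_norm_sq, ← real_inner_self_eq_norm_sq]
      simp only [inner_sub_left, inner_sub_right, inner_smul_left, inner_smul_right,
        RCLike.conj_to_real]
      have hbb : ⟪b, b⟫_ℝ = 1 := by
        rw [real_inner_self_eq_norm_sq, hb]; norm_num
      rw [real_inner_comm z b, hbb]; ring
    rw [hq, ← hexp]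
    exact (Real.sqrt_sq (norm_nonneg _))
  -- cross term bound
  have hcross : ∀ z₁ z₂ : V, |⟪z₁, z₂⟫_ℝ - ⟪b, z₁⟫_ℝ * ⟪b, z₂⟫_ℝ| ≤ q z₁ * q z₂ := by
    intro z₁ z₂
    have hip : ⟪z₁ - ⟪b, z₁⟫_ℝ • b, z₂ - ⟪b, z₂⟫_ℝ • b⟫_ℝ
        = ⟪z₁, z₂⟫_ℝ - ⟪b, z₁⟫_ℝ * ⟪b, z₂⟫_ℝ := by
      simp only [inner_sub_left, inner_sub_right, inner_smul_left, inner_smul_right,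
        RCLike.conj_to_real]
      have hbb : ⟪b, b⟫_ℝ = 1 := by
        rw [real_inner_self_eq_norm_sq, hb]; norm_num
      rw [real_inner_comm z₁ b, hbb]; ring
    rw [← hip, hqnorm z₁, hqnorm z₂]
    exact abs_real_inner_le_norm _ _
  -- B = A² + h² q²
  have hBA : ∀ z : V, B z = (A z) ^ 2 + h ^ 2 * (q z) ^ 2 := by
    intro z; rw [hB, hA, hh2]; ring
  have hBnn : ∀ z : V, 0 ≤ B z := by intro z; rw [hBA]; positivity
  have hBy : 0 < B y := by
    rw [hBA]
    have : 0 < h ^ 2 * (q y) ^ 2 := by positivity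
    nlinarith [sq_nonneg (A y)]
  have hy0 : y ≠ 0 := by
    intro h0
    rw [h0, hq] at hqy
    simp at hqy
  -- the key inequality : lam z₁ z₂ ≤ 1 for nonzero arguments
  have hle : ∀ z₁ z₂ : V, z₁ ≠ 0 → z₂ ≠ 0 → lam z₁ z₂ ≤ 1 := by
    intro z₁ z₂ hz₁ hz₂
    rw [hlam z₁ z₂ hz₁ hz₂]
    rcases eq_or_lt_of_le (hBnn z₁) with hB1 | hB1
    · rw [← hB1]
      simp
    rcases eq_or_lt_of_le (hBnn z₂) with hB2 | hB2
    · rw [← hB2]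
      simp
    have hsq : 0 < Real.sqrt (B z₁ * B z₂) := Real.sqrt_pos.mpr (by positivity)
    rw [div_le_one hsq]
    -- numerator ≤ M := A z₁ * A z₂ + h² q z₁ q z₂
    have h1 : A z₁ * A z₂ + h ^ 2 * (⟪z₁, z₂⟫_ℝ - ⟪b, z₁⟫_ℝ * ⟪b, z₂⟫_ℝ)
        ≤ A z₁ * A z₂ + h ^ 2 * (q z₁ * q z₂) := by
      have := hcross z₁ z₂
      have h2 : ⟪z₁, z₂⟫_ℝ - ⟪b, z₁⟫_ℝ * ⟪b, z₂⟫_ℝ ≤ q z₁ * q z₂ :=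
        (le_abs_self _).trans this
      nlinarith [sq_nonneg h]
    refine h1.trans ?_
    set M := A z₁ * A z₂ + h ^ 2 * (q z₁ * q z₂) with hM
    have hMsq : M ^ 2 ≤ B z₁ * B z₂ := by
      rw [hBA, hBA, hM]
      nlinarith [sq_nonneg (A z₁ * (h * q z₂) - A z₂ * (h * q z₁))]
    calc M ≤ |M| := le_abs_self M
      _ = Real.sqrt (M ^ 2) := (Real.sqrt_sq_eq_abs M).symm
      _ ≤ Real.sqrt (B z₁ * B z₂) := Real.sqrt_le_sqrt hMsq
  -- diagonal value
  have hdiag : lam y y = 1 := by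
    rw [hlam y y hy0 hy0]
    have hnum : A y * A y + h ^ 2 * (⟪y, y⟫_ℝ - ⟪b, y⟫_ℝ * ⟪b, y⟫_ℝ) = B y := by
      rw [hBA]
      have : ⟪y, y⟫_ℝ - ⟪b, y⟫_ℝ * ⟪b, y⟫_ℝ = q y ^ 2 := by
        rw [hqsq, real_inner_self_eq_norm_sq]; ring
      rw [this]; ring
    rw [hnum, Real.sqrt_mul_self (hBnn y)]
    exact div_self hBy.ne'
  have hev : ∀ᶠ z in nhds y, z ≠ 0 := eventually_ne_nhds hy0
  constructor
  · have hmax : IsLocalMax (fun y₁ => lam y₁ y) y := by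
      refine hev.mono fun z hz => ?_
      simp only
      rw [hdiag]
      exact hle z y hz hy0
    exact hmax.fderiv_eq_zero
  · have hmax : IsLocalMax (fun y₂ => lam y y₂) y := by
      refine hev.mono fun z hz => ?_
      simp only
      rw [hdiag]
      exact hle y z hy0 hz
    exact hmax.fderiv_eq_zero
end

section
/- Let V be a finite-dimensional real inner product space, U ⊆ V open, and let b : U → V be smooth with ‖b(x)‖ = 1 for all x ∈ U and derivative Db(x)(u) = k(x)·(u − ⟨b(x),u⟩·b(x)) for all u ∈ V, where k : U → ℝ is smooth (the flat Landsberg condition). Fix g ∈ ℝ with |g| < 2 and set h = √(1 − g²/4). For x ∈ U and y ∈ V define q(x,y) = √(‖y‖² − ⟨b(x),y⟩²), v(x,y) = y − ⟨b(x),y⟩b(x), A(x,y) = ⟨b(x),y⟩ + (g/2)q(x,y), B(x,y) = ⟨b(x),y⟩² + g⟨b(x),y⟩q(x,y) + q(x,y)², Λ(x,y₁,y₂) = (A(x,y₁)A(x,y₂) + h²(⟨y₁,y₂⟩ − ⟨b(x),y₁⟩⟨b(x),y₂⟩))/√(B(x,y₁)B(x,y₂)), and the spray endomorphism G_{x,y}(w)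 = (g·k(x)/q(x,y))·[⟨v(x,y),w⟩·v(x,y) + q(x,y)²·(w − ⟨b(x),w⟩·b(x))]. Then for all x ∈ U, all y₁, y₂ with q(x,y₁) > 0 and q(x,y₂) > 0, and all w ∈ V: D_xΛ(x,y₁,y₂)(w) = (1/2)·D_{y₁}Λ(x,y₁,y₂)(G_{x,y₁}(w)) + (1/2)·D_{y₂}Λ(x,y₁,y₂)(G_{x,y₂}(w)). -/
open scoped InnerProductSpace

private lemma hasFDerivAt_sq' {E : Type*} [NormedAddCommGroup E] [NormedSpace ℝ E]
    {c : E → ℝ} {Dc : E →L[ℝ] ℝ} {x : E} (hc : HasFDerivAt c Dc x) :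
    HasFDerivAt (fun z => c z ^ 2) ((2 * c x) • Dc) x := by
  simpa [Function.comp_def] using (hasDerivAt_pow 2 (c x)).comp_hasFDerivAt x hc

private lemma HasFDerivAt.sqrtInv {E : Type*} [NormedAddCommGroup E] [NormedSpace ℝ E]
    {f : E → ℝ} {f' : E →L[ℝ] ℝ} {x : E}
    (hf : HasFDerivAt f f' x) (hx : 0 < f x) :
    HasFDerivAt (fun z => (Real.sqrt (f z))⁻¹)
      ((-(1 / (2 * Real.sqrt (f x) * f x))) • f') x := by
  have h1 : Real.sqrt (f x) ≠ 0 := (Real.sqrt_pos.mpr hx).ne'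
  have h2 := (hasDerivAt_inv h1).comp_hasFDerivAt x (hf.sqrt hx.ne')
  refine h2.congr_fderiv ?_
  rw [smul_smul]
  congr 1
  rw [Real.sq_sqrt hx.le]
  field_simp

private lemma hasFDerivAt_normSq {V : Type*} [NormedAddCommGroup V] [InnerProductSpace ℝ V]
    (y : V) : HasFDerivAt (fun z : V => ‖z‖ ^ 2) ((2 : ℝ) • (innerSL ℝ y)) y := by
  have h0 := (hasFDerivAt_id y).inner ℝ (hasFDerivAt_id y)
  simp only [id_eq] at h0
  have e : (fun z : V => ⟪z, z⟫_ℝ) = fun z => ‖z‖ ^ 2 := by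
    funext z; exact real_inner_self_eq_norm_sq z
  rw [e] at h0
  refine h0.congr_fderiv ?_
  ext u
  simp [fderivInnerCLM_apply, real_inner_comm]
  ring

private lemma hasFDerivAt_inner_right {V : Type*} [NormedAddCommGroup V] [InnerProductSpace ℝ V]
    (a y : V) : HasFDerivAt (fun z : V => ⟪z, a⟫_ℝ) (innerSL ℝ a) y := by
  have h0 := (innerSL ℝ a).hasFDerivAt (x := y)
  have e : (fun z : V => ⟪z, a⟫_ℝ) = fun z => ⟪a, z⟫_ℝ := by
    funext z; exact real_inner_comm _ _
  rw [e]; exact h0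

private lemma hasFDerivAt_inner_left {V : Type*} [NormedAddCommGroup V] [InnerProductSpace ℝ V]
    (a y : V) : HasFDerivAt (fun z : V => ⟪a, z⟫_ℝ) (innerSL ℝ a) y :=
  (innerSL ℝ a).hasFDerivAt

private lemma keyD {E : Type*} [NormedAddCommGroup E] [NormedSpace ℝ E]
    (g h : ℝ) (c₁ c₂ t₁ t₂ s : E → ℝ) (x : E)
    {Dc₁ Dc₂ Dt₁ Dt₂ Ds : E →L[ℝ] ℝ}
    (hc₁ : HasFDerivAt c₁ Dc₁ x) (hc₂ : HasFDerivAt c₂ Dc₂ x)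
    (ht₁ : HasFDerivAt t₁ Dt₁ x) (ht₂ : HasFDerivAt t₂ Dt₂ x)
    (hs : HasFDerivAt s Ds x)
    (hB₁ : 0 < c₁ x ^ 2 + g * c₁ x * t₁ x + t₁ x ^ 2)
    (hB₂ : 0 < c₂ x ^ 2 + g * c₂ x * t₂ x + t₂ x ^ 2)
    (u : E) :
    fderiv ℝ (fun z =>
        ((c₁ z + g / 2 * t₁ z) * (c₂ z + g / 2 * t₂ z)
            + h ^ 2 * (s z - c₁ z * c₂ z))
          / Real.sqrt ((c₁ z ^ 2 + g * c₁ z * t₁ z + t₁ z ^ 2)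
              * (c₂ z ^ 2 + g * c₂ z * t₂ z + t₂ z ^ 2))) x u
      = (1 / Real.sqrt ((c₁ x ^ 2 + g * c₁ x * t₁ x + t₁ x ^ 2)
              * (c₂ x ^ 2 + g * c₂ x * t₂ x + t₂ x ^ 2)))
          * (((c₂ x + g / 2 * t₂ x) - h ^ 2 * c₂ x) * Dc₁ u
            + ((c₁ x + g / 2 * t₁ x) - h ^ 2 * c₁ x) * Dc₂ u
            + g / 2 * (c₂ x + g / 2 * t₂ x) * Dt₁ u
            + g / 2 * (c₁ x + g / 2 * t₁ x) * Dt₂ u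
            + h ^ 2 * Ds u)
        - (((c₁ x + g / 2 * t₁ x) * (c₂ x + g / 2 * t₂ x)
              + h ^ 2 * (s x - c₁ x * c₂ x))
            / (2 * Real.sqrt ((c₁ x ^ 2 + g * c₁ x * t₁ x + t₁ x ^ 2)
                * (c₂ x ^ 2 + g * c₂ x * t₂ x + t₂ x ^ 2))))
          * (((2 * c₁ x + g * t₁ x) * Dc₁ u + (g * c₁ x + 2 * t₁ x) * Dt₁ u)
                / (c₁ x ^ 2 + g * c₁ x * t₁ x + t₁ x ^ 2)
            + ((2 * c₂ x + g * t₂ x) * Dc₂ u + (g * c₂ x + 2 * t₂ x) * Dt₂ u)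
                / (c₂ x ^ 2 + g * c₂ x * t₂ x + t₂ x ^ 2)) := by
  have hP : 0 < (c₁ x ^ 2 + g * c₁ x * t₁ x + t₁ x ^ 2)
      * (c₂ x ^ 2 + g * c₂ x * t₂ x + t₂ x ^ 2) := mul_pos hB₁ hB₂
  have hN := ((hc₁.add (ht₁.const_mul (g / 2))).mul
      (hc₂.add (ht₂.const_mul (g / 2)))).add
      ((hs.sub (hc₁.mul hc₂)).const_mul (h ^ 2))
  have hBd₁ := ((hasFDerivAt_sq' hc₁).add ((hc₁.const_mul g).mul ht₁)).add (hasFDerivAt_sq' ht₁)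
  have hBd₂ := ((hasFDerivAt_sq' hc₂).add ((hc₂.const_mul g).mul ht₂)).add (hasFDerivAt_sq' ht₂)
  have hf := hN.mul ((hBd₁.mul hBd₂).sqrtInv hP)
  have e : (fun z : E =>
        ((c₁ z + g / 2 * t₁ z) * (c₂ z + g / 2 * t₂ z)
            + h ^ 2 * (s z - c₁ z * c₂ z))
          / Real.sqrt ((c₁ z ^ 2 + g * c₁ z * t₁ z + t₁ z ^ 2)
              * (c₂ z ^ 2 + g * c₂ z * t₂ z + t₂ z ^ 2)))
      = fun z =>
        ((c₁ z + g / 2 * t₁ z) * (c₂ z + g / 2 * t₂ z)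
            + h ^ 2 * (s z - c₁ z * c₂ z))
          * (Real.sqrt ((c₁ z ^ 2 + g * c₁ z * t₁ z + t₁ z ^ 2)
              * (c₂ z ^ 2 + g * c₂ z * t₂ z + t₂ z ^ 2)))⁻¹ := by
    funext z; rw [div_eq_mul_inv]
  rw [e]
  have hfd : fderiv ℝ (fun z =>
        ((c₁ z + g / 2 * t₁ z) * (c₂ z + g / 2 * t₂ z)
            + h ^ 2 * (s z - c₁ z * c₂ z))
          * (Real.sqrt ((c₁ z ^ 2 + g * c₁ z * t₁ z + t₁ z ^ 2)
              * (c₂ z ^ 2 + g * c₂ z * t₂ z + t₂ z ^ 2)))⁻¹) x = _ := hf.fderiv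
  rw [hfd]
  have hD0 : Real.sqrt ((c₁ x ^ 2 + g * c₁ x * t₁ x + t₁ x ^ 2)
      * (c₂ x ^ 2 + g * c₂ x * t₂ x + t₂ x ^ 2)) ≠ 0 := (Real.sqrt_pos.mpr hP).ne'
  simp only [ContinuousLinearMap.add_apply, ContinuousLinearMap.smul_apply,
    ContinuousLinearMap.sub_apply, smul_eq_mul, ContinuousLinearMap.coe_smul',
    Pi.smul_apply, Pi.add_apply, Pi.mul_apply, Pi.sub_apply]
  generalize Real.sqrt ((c₁ x ^ 2 + g * c₁ x * t₁ x + t₁ x ^ 2)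
      * (c₂ x ^ 2 + g * c₂ x * t₂ x + t₂ x ^ 2)) = D at hD0 ⊢
  have hB₁' := hB₁.ne'
  have hB₂' := hB₂.ne'
  generalize c₁ x ^ 2 + g * c₁ x * t₁ x + t₁ x ^ 2 = B1 at hB₁' ⊢
  generalize c₂ x ^ 2 + g * c₂ x * t₂ x + t₂ x ^ 2 = B2 at hB₂' ⊢
  field_simp
  ring



set_option maxHeartbeats 2000000 in
/-- In the flat Finsleroid setting with a unit axis vector field `b`
satisfying the Landsberg condition `Db(x)(u) = k(x)·(u − ⟨b(x),u⟩·b(x))`, the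
Finsleroid quantity `Λ(x, y₁, y₂)` satisfies, for `q(x,y₁) > 0`, `q(x,y₂) > 0` and
every direction `w`, the identity (equation (A.14) of the paper)
`D_xΛ(w) = (1/2)·D_{y₁}Λ(G_{x,y₁}(w)) + (1/2)·D_{y₂}Λ(G_{x,y₂}(w))`,
where `G_{x,y}` is the Landsberg spray endomorphism. -/
theorem finsleroid_parallel_transport_lambda
    {V : Type*} [NormedAddCommGroup V] [InnerProductSpace ℝ V] [FiniteDimensional ℝ V]
    (U : Set V) (hU : IsOpen U) (b : V → V) (k : V → ℝ)
    (hbs : ContDiffOn ℝ (⊤ : ℕ∞) b U) (hks : ContDiffOn ℝ (⊤ : ℕ∞) k U)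
    (hbnorm : ∀ x ∈ U, ‖b x‖ = 1)
    (hDb : ∀ x ∈ U, ∀ u : V, fderiv ℝ b x u = k x • (u - ⟪b x, u⟫_ℝ • b x))
    (g h : ℝ) (hg : |g| < 2) (hh : h = Real.sqrt (1 - g ^ 2 / 4))
    (q A B : V → V → ℝ) (v : V → V → V) (Lam : V → V → V → ℝ) (G : V → V → V → V)
    (hq : ∀ x y : V, q x y = Real.sqrt (‖y‖ ^ 2 - ⟪b x, y⟫_ℝ ^ 2))
    (hv : ∀ x y : V, v x y = y - ⟪b x, y⟫_ℝ • b x)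
    (hA : ∀ x y : V, A x y = ⟪b x, y⟫_ℝ + (g / 2) * q x y)
    (hB : ∀ x y : V, B x y = ⟪b x, y⟫_ℝ ^ 2 + g * ⟪b x, y⟫_ℝ * q x y + q x y ^ 2)
    (hLam : ∀ x y₁ y₂ : V,
      Lam x y₁ y₂
        = (A x y₁ * A x y₂ + h ^ 2 * (⟪y₁, y₂⟫_ℝ - ⟪b x, y₁⟫_ℝ * ⟪b x, y₂⟫_ℝ))
          / Real.sqrt (B x y₁ * B x y₂))
    (hG : ∀ x y w : V,
      G x y w = (g * k x / q x y)
        • (⟪v x y, w⟫_ℝ • v x y + (q x y ^ 2) • (w - ⟪b x, w⟫_ℝ • b x))) :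
    ∀ x ∈ U, ∀ y₁ y₂ : V, 0 < q x y₁ → 0 < q x y₂ → ∀ w : V,
      fderiv ℝ (fun x' => Lam x' y₁ y₂) x w
        = (1 / 2) * fderiv ℝ (fun y => Lam x y y₂) y₁ (G x y₁ w)
          + (1 / 2) * fderiv ℝ (fun y => Lam x y₁ y) y₂ (G x y₂ w) := by
  
  intro x hx y₁ y₂ hq1 hq2 w
  have hbd : DifferentiableAt ℝ b x :=
    (hbs.contDiffAt (hU.mem_nhds hx)).differentiableAt (by simp)
  have hbb : ⟪b x, b x⟫_ℝ = 1 := by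
    rw [real_inner_self_eq_norm_sq, hbnorm x hx]; norm_num
  have hin1 : 0 < ‖y₁‖ ^ 2 - ⟪b x, y₁⟫_ℝ ^ 2 := by
    rw [hq x y₁] at hq1; exact Real.sqrt_pos.mp hq1
  have hin2 : 0 < ‖y₂‖ ^ 2 - ⟪b x, y₂⟫_ℝ ^ 2 := by
    rw [hq x y₂] at hq2; exact Real.sqrt_pos.mp hq2
  have hg' := abs_lt.mp hg
  have hg4 : g ^ 2 < 4 := by nlinarith [hg'.1, hg'.2]
  have hsq : h ^ 2 = 1 - g ^ 2 / 4 := by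
    rw [hh]; exact Real.sq_sqrt (by nlinarith)
  have hS1pos : 0 < Real.sqrt (‖y₁‖ ^ 2 - ⟪b x, y₁⟫_ℝ ^ 2) := Real.sqrt_pos.mpr hin1
  have hS2pos : 0 < Real.sqrt (‖y₂‖ ^ 2 - ⟪b x, y₂⟫_ℝ ^ 2) := Real.sqrt_pos.mpr hin2
  have hB1pos : 0 < ⟪b x, y₁⟫_ℝ ^ 2 + g * ⟪b x, y₁⟫_ℝ * Real.sqrt (‖y₁‖ ^ 2 - ⟪b x, y₁⟫_ℝ ^ 2) + Real.sqrt (‖y₁‖ ^ 2 - ⟪b x, y₁⟫_ℝ ^ 2) ^ 2 := by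
    nlinarith [sq_nonneg (⟪b x, y₁⟫_ℝ + g / 2 * Real.sqrt (‖y₁‖ ^ 2 - ⟪b x, y₁⟫_ℝ ^ 2)), mul_pos hS1pos hS1pos, hg4]
  have hB2pos : 0 < ⟪b x, y₂⟫_ℝ ^ 2 + g * ⟪b x, y₂⟫_ℝ * Real.sqrt (‖y₂‖ ^ 2 - ⟪b x, y₂⟫_ℝ ^ 2) + Real.sqrt (‖y₂‖ ^ 2 - ⟪b x, y₂⟫_ℝ ^ 2) ^ 2 := by
    nlinarith [sq_nonneg (⟪b x, y₂⟫_ℝ + g / 2 * Real.sqrt (‖y₂‖ ^ 2 - ⟪b x, y₂⟫_ℝ ^ 2)), mul_pos hS2pos hS2pos, hg4]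
  have hDDpos : 0 < Real.sqrt ((⟪b x, y₁⟫_ℝ ^ 2 + g * ⟪b x, y₁⟫_ℝ * Real.sqrt (‖y₁‖ ^ 2 - ⟪b x, y₁⟫_ℝ ^ 2) + Real.sqrt (‖y₁‖ ^ 2 - ⟪b x, y₁⟫_ℝ ^ 2) ^ 2) * (⟪b x, y₂⟫_ℝ ^ 2 + g * ⟪b x, y₂⟫_ℝ * Real.sqrt (‖y₂‖ ^ 2 - ⟪b x, y₂⟫_ℝ ^ 2) + Real.sqrt (‖y₂‖ ^ 2 - ⟪b x, y₂⟫_ℝ ^ 2) ^ 2)) := Real.sqrt_pos.mpr (mul_pos hB1pos hB2pos)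
  -- derivatives of the components for the x-slot
  have hc1x : HasFDerivAt (fun x' => ⟪b x', y₁⟫_ℝ) ((innerSL ℝ y₁).comp (fderiv ℝ b x)) x := by
    have h0 := (innerSL ℝ y₁).hasFDerivAt.comp x hbd.hasFDerivAt
    have e : (fun x' => ⟪b x', y₁⟫_ℝ) = fun x' => ⟪y₁, b x'⟫_ℝ := by
      funext x'; exact real_inner_comm _ _
    rw [e]; exact h0
  have hc2x : HasFDerivAt (fun x' => ⟪b x', y₂⟫_ℝ) ((innerSL ℝ y₂).comp (fderiv ℝ b x)) x := by
    have h0 := (innerSL ℝ y₂).hasFDerivAt.comp x hbd.hasFDerivAt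
    have e : (fun x' => ⟪b x', y₂⟫_ℝ) = fun x' => ⟪y₂, b x'⟫_ℝ := by
      funext x'; exact real_inner_comm _ _
    rw [e]; exact h0
  have ht1x : HasFDerivAt (fun x' => Real.sqrt (‖y₁‖ ^ 2 - ⟪b x', y₁⟫_ℝ ^ 2)) ((1 / (2 * Real.sqrt (‖y₁‖ ^ 2 - ⟪b x, y₁⟫_ℝ ^ 2))) • ((0 : V →L[ℝ] ℝ) - (2 * ⟪b x, y₁⟫_ℝ) • ((innerSL ℝ y₁).comp (fderiv ℝ b x)))) x :=
    ((hasFDerivAt_const (‖y₁‖ ^ 2) x).sub (hasFDerivAt_sq' hc1x)).sqrt hin1.ne'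
  have ht2x : HasFDerivAt (fun x' => Real.sqrt (‖y₂‖ ^ 2 - ⟪b x', y₂⟫_ℝ ^ 2)) ((1 / (2 * Real.sqrt (‖y₂‖ ^ 2 - ⟪b x, y₂⟫_ℝ ^ 2))) • ((0 : V →L[ℝ] ℝ) - (2 * ⟪b x, y₂⟫_ℝ) • ((innerSL ℝ y₂).comp (fderiv ℝ b x)))) x :=
    ((hasFDerivAt_const (‖y₂‖ ^ 2) x).sub (hasFDerivAt_sq' hc2x)).sqrt hin2.ne'
  -- derivatives for the y₁-slot
  have hcy1 : HasFDerivAt (fun y : V => ⟪b x, y⟫_ℝ) (innerSL ℝ (b x)) y₁ :=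
    hasFDerivAt_inner_left (b x) y₁
  have hty1 : HasFDerivAt (fun y : V => Real.sqrt (‖y‖ ^ 2 - ⟪b x, y⟫_ℝ ^ 2)) ((1 / (2 * Real.sqrt (‖y₁‖ ^ 2 - ⟪b x, y₁⟫_ℝ ^ 2))) • ((2 : ℝ) • innerSL ℝ y₁ - (2 * ⟪b x, y₁⟫_ℝ) • innerSL ℝ (b x))) y₁ :=
    ((hasFDerivAt_normSq y₁).sub (hasFDerivAt_sq' hcy1)).sqrt hin1.ne'
  have hsy1 : HasFDerivAt (fun y : V => ⟪y, y₂⟫_ℝ) (innerSL ℝ y₂) y₁ :=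
    hasFDerivAt_inner_right y₂ y₁
  -- derivatives for the y₂-slot
  have hcy2 : HasFDerivAt (fun y : V => ⟪b x, y⟫_ℝ) (innerSL ℝ (b x)) y₂ :=
    hasFDerivAt_inner_left (b x) y₂
  have hty2 : HasFDerivAt (fun y : V => Real.sqrt (‖y‖ ^ 2 - ⟪b x, y⟫_ℝ ^ 2)) ((1 / (2 * Real.sqrt (‖y₂‖ ^ 2 - ⟪b x, y₂⟫_ℝ ^ 2))) • ((2 : ℝ) • innerSL ℝ y₂ - (2 * ⟪b x, y₂⟫_ℝ) • innerSL ℝ (b x))) y₂ :=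
    ((hasFDerivAt_normSq y₂).sub (hasFDerivAt_sq' hcy2)).sqrt hin2.ne'
  have hsy2 : HasFDerivAt (fun y : V => ⟪y₁, y⟫_ℝ) (innerSL ℝ y₁) y₂ :=
    hasFDerivAt_inner_left y₁ y₂
  -- the three fderiv computations
  have e1 : (fun x' => Lam x' y₁ y₂) = fun x' => (((⟪b x', y₁⟫_ℝ + g / 2 * Real.sqrt (‖y₁‖ ^ 2 - ⟪b x', y₁⟫_ℝ ^ 2)) * (⟪b x', y₂⟫_ℝ + g / 2 * Real.sqrt (‖y₂‖ ^ 2 - ⟪b x', y₂⟫_ℝ ^ 2))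
          + h ^ 2 * (⟪y₁, y₂⟫_ℝ - ⟪b x', y₁⟫_ℝ * ⟪b x', y₂⟫_ℝ))
        / Real.sqrt ((⟪b x', y₁⟫_ℝ ^ 2 + g * ⟪b x', y₁⟫_ℝ * Real.sqrt (‖y₁‖ ^ 2 - ⟪b x', y₁⟫_ℝ ^ 2) + Real.sqrt (‖y₁‖ ^ 2 - ⟪b x', y₁⟫_ℝ ^ 2) ^ 2)
            * (⟪b x', y₂⟫_ℝ ^ 2 + g * ⟪b x', y₂⟫_ℝ * Real.sqrt (‖y₂‖ ^ 2 - ⟪b x', y₂⟫_ℝ ^ 2) + Real.sqrt (‖y₂‖ ^ 2 - ⟪b x', y₂⟫_ℝ ^ 2) ^ 2))) := by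
    funext x'; simp only [hLam, hA, hB, hq]
  have e2 : (fun y => Lam x y y₂) = fun y => (((⟪b x, y⟫_ℝ + g / 2 * Real.sqrt (‖y‖ ^ 2 - ⟪b x, y⟫_ℝ ^ 2)) * (⟪b x, y₂⟫_ℝ + g / 2 * Real.sqrt (‖y₂‖ ^ 2 - ⟪b x, y₂⟫_ℝ ^ 2))
          + h ^ 2 * (⟪y, y₂⟫_ℝ - ⟪b x, y⟫_ℝ * ⟪b x, y₂⟫_ℝ))
        / Real.sqrt ((⟪b x, y⟫_ℝ ^ 2 + g * ⟪b x, y⟫_ℝ * Real.sqrt (‖y‖ ^ 2 - ⟪b x, y⟫_ℝ ^ 2) + Real.sqrt (‖y‖ ^ 2 - ⟪b x, y⟫_ℝ ^ 2) ^ 2)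
            * (⟪b x, y₂⟫_ℝ ^ 2 + g * ⟪b x, y₂⟫_ℝ * Real.sqrt (‖y₂‖ ^ 2 - ⟪b x, y₂⟫_ℝ ^ 2) + Real.sqrt (‖y₂‖ ^ 2 - ⟪b x, y₂⟫_ℝ ^ 2) ^ 2))) := by
    funext y; simp only [hLam, hA, hB, hq]
  have e3 : (fun y => Lam x y₁ y) = fun y => (((⟪b x, y₁⟫_ℝ + g / 2 * Real.sqrt (‖y₁‖ ^ 2 - ⟪b x, y₁⟫_ℝ ^ 2)) * (⟪b x, y⟫_ℝ + g / 2 * Real.sqrt (‖y‖ ^ 2 - ⟪b x, y⟫_ℝ ^ 2))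
          + h ^ 2 * (⟪y₁, y⟫_ℝ - ⟪b x, y₁⟫_ℝ * ⟪b x, y⟫_ℝ))
        / Real.sqrt ((⟪b x, y₁⟫_ℝ ^ 2 + g * ⟪b x, y₁⟫_ℝ * Real.sqrt (‖y₁‖ ^ 2 - ⟪b x, y₁⟫_ℝ ^ 2) + Real.sqrt (‖y₁‖ ^ 2 - ⟪b x, y₁⟫_ℝ ^ 2) ^ 2)
            * (⟪b x, y⟫_ℝ ^ 2 + g * ⟪b x, y⟫_ℝ * Real.sqrt (‖y‖ ^ 2 - ⟪b x, y⟫_ℝ ^ 2) + Real.sqrt (‖y‖ ^ 2 - ⟪b x, y⟫_ℝ ^ 2) ^ 2))) := by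
    funext y; simp only [hLam, hA, hB, hq]
  have H1 : fderiv ℝ (fun x' => Lam x' y₁ y₂) x w
      = (1 / Real.sqrt ((⟪b x, y₁⟫_ℝ ^ 2 + g * ⟪b x, y₁⟫_ℝ * Real.sqrt (‖y₁‖ ^ 2 - ⟪b x, y₁⟫_ℝ ^ 2) + Real.sqrt (‖y₁‖ ^ 2 - ⟪b x, y₁⟫_ℝ ^ 2) ^ 2) * (⟪b x, y₂⟫_ℝ ^ 2 + g * ⟪b x, y₂⟫_ℝ * Real.sqrt (‖y₂‖ ^ 2 - ⟪b x, y₂⟫_ℝ ^ 2) + Real.sqrt (‖y₂‖ ^ 2 - ⟪b x, y₂⟫_ℝ ^ 2) ^ 2)))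
          * (((⟪b x, y₂⟫_ℝ + g / 2 * Real.sqrt (‖y₂‖ ^ 2 - ⟪b x, y₂⟫_ℝ ^ 2)) - h ^ 2 * ⟪b x, y₂⟫_ℝ) * (((innerSL ℝ y₁).comp (fderiv ℝ b x)) w)
            + ((⟪b x, y₁⟫_ℝ + g / 2 * Real.sqrt (‖y₁‖ ^ 2 - ⟪b x, y₁⟫_ℝ ^ 2)) - h ^ 2 * ⟪b x, y₁⟫_ℝ) * (((innerSL ℝ y₂).comp (fderiv ℝ b x)) w)
            + g / 2 * (⟪b x, y₂⟫_ℝ + g / 2 * Real.sqrt (‖y₂‖ ^ 2 - ⟪b x, y₂⟫_ℝ ^ 2)) * (((1 / (2 * Real.sqrt (‖y₁‖ ^ 2 - ⟪b x, y₁⟫_ℝ ^ 2))) • ((0 : V →L[ℝ] ℝ) - (2 * ⟪b x, y₁⟫_ℝ) • ((innerSL ℝ y₁).comp (fderiv ℝ b x)))) w)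
            + g / 2 * (⟪b x, y₁⟫_ℝ + g / 2 * Real.sqrt (‖y₁‖ ^ 2 - ⟪b x, y₁⟫_ℝ ^ 2)) * (((1 / (2 * Real.sqrt (‖y₂‖ ^ 2 - ⟪b x, y₂⟫_ℝ ^ 2))) • ((0 : V →L[ℝ] ℝ) - (2 * ⟪b x, y₂⟫_ℝ) • ((innerSL ℝ y₂).comp (fderiv ℝ b x)))) w)
            + h ^ 2 * ((0 : V →L[ℝ] ℝ) w))
        - (((⟪b x, y₁⟫_ℝ + g / 2 * Real.sqrt (‖y₁‖ ^ 2 - ⟪b x, y₁⟫_ℝ ^ 2)) * (⟪b x, y₂⟫_ℝ + g / 2 * Real.sqrt (‖y₂‖ ^ 2 - ⟪b x, y₂⟫_ℝ ^ 2)) + h ^ 2 * (⟪y₁, y₂⟫_ℝ - ⟪b x, y₁⟫_ℝ * ⟪b x, y₂⟫_ℝ)) / (2 * Real.sqrt ((⟪b x, y₁⟫_ℝ ^ 2 + g * ⟪b x, y₁⟫_ℝ * Real.sqrt (‖y₁‖ ^ 2 - ⟪b x, y₁⟫_ℝ ^ 2) + Real.sqrt (‖y₁‖ ^ 2 - ⟪b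 x, y₁⟫_ℝ ^ 2) ^ 2) * (⟪b x, y₂⟫_ℝ ^ 2 + g * ⟪b x, y₂⟫_ℝ * Real.sqrt (‖y₂‖ ^ 2 - ⟪b x, y₂⟫_ℝ ^ 2) + Real.sqrt (‖y₂‖ ^ 2 - ⟪b x, y₂⟫_ℝ ^ 2) ^ 2))))
          * (((2 * ⟪b x, y₁⟫_ℝ + g * Real.sqrt (‖y₁‖ ^ 2 - ⟪b x, y₁⟫_ℝ ^ 2)) * (((innerSL ℝ y₁).comp (fderiv ℝ b x)) w) + (g * ⟪b x, y₁⟫_ℝ + 2 * Real.sqrt (‖y₁‖ ^ 2 - ⟪b x, y₁⟫_ℝ ^ 2)) * (((1 / (2 * Real.sqrt (‖y₁‖ ^ 2 - ⟪b x, y₁⟫_ℝ ^ 2))) • ((0 : V →L[ℝ] ℝ) - (2 * ⟪b x, y₁⟫_ℝ) • ((innerSL ℝ y₁).comp (fderiv ℝ b x)))) w)) / (⟪b x, y₁⟫_ℝ ^ 2 + g * ⟪b x, y₁⟫_ℝ * Real.sqrt (‖y₁‖ ^ 2 - ⟪b x, y₁⟫_ℝ ^ 2) + Real.sqrt (‖y₁‖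 ^ 2 - ⟪b x, y₁⟫_ℝ ^ 2) ^ 2)
            + ((2 * ⟪b x, y₂⟫_ℝ + g * Real.sqrt (‖y₂‖ ^ 2 - ⟪b x, y₂⟫_ℝ ^ 2)) * (((innerSL ℝ y₂).comp (fderiv ℝ b x)) w) + (g * ⟪b x, y₂⟫_ℝ + 2 * Real.sqrt (‖y₂‖ ^ 2 - ⟪b x, y₂⟫_ℝ ^ 2)) * (((1 / (2 * Real.sqrt (‖y₂‖ ^ 2 - ⟪b x, y₂⟫_ℝ ^ 2))) • ((0 : V →L[ℝ] ℝ) - (2 * ⟪b x, y₂⟫_ℝ) • ((innerSL ℝ y₂).comp (fderiv ℝ b x)))) w)) / (⟪b x, y₂⟫_ℝ ^ 2 + g * ⟪b x, y₂⟫_ℝ * Real.sqrt (‖y₂‖ ^ 2 - ⟪b x, y₂⟫_ℝ ^ 2) + Real.sqrt (‖y₂‖ ^ 2 - ⟪b x, y₂⟫_ℝ ^ 2) ^ 2)) := by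
    rw [e1]
    exact keyD g h _ _ _ _ _ x hc1x hc2x ht1x ht2x (hasFDerivAt_const ⟪y₁, y₂⟫_ℝ x)
      hB1pos hB2pos w
  have H2 : fderiv ℝ (fun y => Lam x y y₂) y₁ (G x y₁ w)
      = (1 / Real.sqrt ((⟪b x, y₁⟫_ℝ ^ 2 + g * ⟪b x, y₁⟫_ℝ * Real.sqrt (‖y₁‖ ^ 2 - ⟪b x, y₁⟫_ℝ ^ 2) + Real.sqrt (‖y₁‖ ^ 2 - ⟪b x, y₁⟫_ℝ ^ 2) ^ 2) * (⟪b x, y₂⟫_ℝ ^ 2 + g * ⟪b x, y₂⟫_ℝ * Real.sqrt (‖y₂‖ ^ 2 - ⟪b x, y₂⟫_ℝ ^ 2) + Real.sqrt (‖y₂‖ ^ 2 - ⟪b x, y₂⟫_ℝ ^ 2) ^ 2)))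
          * (((⟪b x, y₂⟫_ℝ + g / 2 * Real.sqrt (‖y₂‖ ^ 2 - ⟪b x, y₂⟫_ℝ ^ 2)) - h ^ 2 * ⟪b x, y₂⟫_ℝ) * ((innerSL ℝ (b x)) (G x y₁ w))
            + ((⟪b x, y₁⟫_ℝ + g / 2 * Real.sqrt (‖y₁‖ ^ 2 - ⟪b x, y₁⟫_ℝ ^ 2)) - h ^ 2 * ⟪b x, y₁⟫_ℝ) * ((0 : V →L[ℝ] ℝ) (G x y₁ w))
            + g / 2 * (⟪b x, y₂⟫_ℝ + g / 2 * Real.sqrt (‖y₂‖ ^ 2 - ⟪b x, y₂⟫_ℝ ^ 2)) * (((1 / (2 * Real.sqrt (‖y₁‖ ^ 2 - ⟪b x, y₁⟫_ℝ ^ 2))) • ((2 : ℝ) • innerSL ℝ y₁ - (2 * ⟪b x, y₁⟫_ℝ) • innerSL ℝ (b x))) (G x y₁ w))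
            + g / 2 * (⟪b x, y₁⟫_ℝ + g / 2 * Real.sqrt (‖y₁‖ ^ 2 - ⟪b x, y₁⟫_ℝ ^ 2)) * ((0 : V →L[ℝ] ℝ) (G x y₁ w))
            + h ^ 2 * ((innerSL ℝ y₂) (G x y₁ w)))
        - (((⟪b x, y₁⟫_ℝ + g / 2 * Real.sqrt (‖y₁‖ ^ 2 - ⟪b x, y₁⟫_ℝ ^ 2)) * (⟪b x, y₂⟫_ℝ + g / 2 * Real.sqrt (‖y₂‖ ^ 2 - ⟪b x, y₂⟫_ℝ ^ 2)) + h ^ 2 * (⟪y₁, y₂⟫_ℝ - ⟪b x, y₁⟫_ℝ * ⟪b x, y₂⟫_ℝ)) / (2 * Real.sqrt ((⟪b x, y₁⟫_ℝ ^ 2 + g * ⟪b x, y₁⟫_ℝ * Real.sqrt (‖y₁‖ ^ 2 - ⟪b x, y₁⟫_ℝ ^ 2) + Real.sqrt (‖y₁‖ ^ 2 - ⟪b x, y₁⟫_ℝ ^ 2) ^ 2) * (⟪b x, y₂⟫_ℝ ^ 2 + g * ⟪b x, y₂⟫_ℝ * Real.sqrt (‖y₂‖ ^ 2 - ⟪b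 x, y₂⟫_ℝ ^ 2) + Real.sqrt (‖y₂‖ ^ 2 - ⟪b x, y₂⟫_ℝ ^ 2) ^ 2))))
          * (((2 * ⟪b x, y₁⟫_ℝ + g * Real.sqrt (‖y₁‖ ^ 2 - ⟪b x, y₁⟫_ℝ ^ 2)) * ((innerSL ℝ (b x)) (G x y₁ w)) + (g * ⟪b x, y₁⟫_ℝ + 2 * Real.sqrt (‖y₁‖ ^ 2 - ⟪b x, y₁⟫_ℝ ^ 2)) * (((1 / (2 * Real.sqrt (‖y₁‖ ^ 2 - ⟪b x, y₁⟫_ℝ ^ 2))) • ((2 : ℝ) • innerSL ℝ y₁ - (2 * ⟪b x, y₁⟫_ℝ) • innerSL ℝ (b x))) (G x y₁ w))) / (⟪b x, y₁⟫_ℝ ^ 2 + g * ⟪b x, y₁⟫_ℝ * Real.sqrt (‖y₁‖ ^ 2 - ⟪b x, y₁⟫_ℝ ^ 2) + Real.sqrt (‖y₁‖ ^ 2 - ⟪b x, y₁⟫_ℝ ^ 2) ^ 2)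
            + ((2 * ⟪b x, y₂⟫_ℝ + g * Real.sqrt (‖y₂‖ ^ 2 - ⟪b x, y₂⟫_ℝ ^ 2)) * ((0 : V →L[ℝ] ℝ) (G x y₁ w)) + (g * ⟪b x, y₂⟫_ℝ + 2 * Real.sqrt (‖y₂‖ ^ 2 - ⟪b x, y₂⟫_ℝ ^ 2)) * ((0 : V →L[ℝ] ℝ) (G x y₁ w))) / (⟪b x, y₂⟫_ℝ ^ 2 + g * ⟪b x, y₂⟫_ℝ * Real.sqrt (‖y₂‖ ^ 2 - ⟪b x, y₂⟫_ℝ ^ 2) + Real.sqrt (‖y₂‖ ^ 2 - ⟪b x, y₂⟫_ℝ ^ 2) ^ 2)) := by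
    rw [e2]
    exact keyD g h _ _ _ _ _ y₁ hcy1 (hasFDerivAt_const ⟪b x, y₂⟫_ℝ y₁) hty1
      (hasFDerivAt_const (Real.sqrt (‖y₂‖ ^ 2 - ⟪b x, y₂⟫_ℝ ^ 2)) y₁) hsy1 hB1pos hB2pos (G x y₁ w)
  have H3 : fderiv ℝ (fun y => Lam x y₁ y) y₂ (G x y₂ w)
      = (1 / Real.sqrt ((⟪b x, y₁⟫_ℝ ^ 2 + g * ⟪b x, y₁⟫_ℝ * Real.sqrt (‖y₁‖ ^ 2 - ⟪b x, y₁⟫_ℝ ^ 2) + Real.sqrt (‖y₁‖ ^ 2 - ⟪b x, y₁⟫_ℝ ^ 2) ^ 2) * (⟪b x, y₂⟫_ℝ ^ 2 + g * ⟪b x, y₂⟫_ℝ * Real.sqrt (‖y₂‖ ^ 2 - ⟪b x, y₂⟫_ℝ ^ 2) + Real.sqrt (‖y₂‖ ^ 2 - ⟪b x, y₂⟫_ℝ ^ 2) ^ 2)))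
          * (((⟪b x, y₂⟫_ℝ + g / 2 * Real.sqrt (‖y₂‖ ^ 2 - ⟪b x, y₂⟫_ℝ ^ 2)) - h ^ 2 * ⟪b x, y₂⟫_ℝ) * ((0 : V →L[ℝ] ℝ) (G x y₂ w))
            + ((⟪b x, y₁⟫_ℝ + g / 2 * Real.sqrt (‖y₁‖ ^ 2 - ⟪b x, y₁⟫_ℝ ^ 2)) - h ^ 2 * ⟪b x, y₁⟫_ℝ) * ((innerSL ℝ (b x)) (G x y₂ w))
            + g / 2 * (⟪b x, y₂⟫_ℝ + g / 2 * Real.sqrt (‖y₂‖ ^ 2 - ⟪b x, y₂⟫_ℝ ^ 2)) * ((0 : V →L[ℝ] ℝ) (G x y₂ w))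
            + g / 2 * (⟪b x, y₁⟫_ℝ + g / 2 * Real.sqrt (‖y₁‖ ^ 2 - ⟪b x, y₁⟫_ℝ ^ 2)) * (((1 / (2 * Real.sqrt (‖y₂‖ ^ 2 - ⟪b x, y₂⟫_ℝ ^ 2))) • ((2 : ℝ) • innerSL ℝ y₂ - (2 * ⟪b x, y₂⟫_ℝ) • innerSL ℝ (b x))) (G x y₂ w))
            + h ^ 2 * ((innerSL ℝ y₁) (G x y₂ w)))
        - (((⟪b x, y₁⟫_ℝ + g / 2 * Real.sqrt (‖y₁‖ ^ 2 - ⟪b x, y₁⟫_ℝ ^ 2)) * (⟪b x, y₂⟫_ℝ + g / 2 * Real.sqrt (‖y₂‖ ^ 2 - ⟪b x, y₂⟫_ℝ ^ 2)) + h ^ 2 * (⟪y₁, y₂⟫_ℝ - ⟪b x, y₁⟫_ℝ * ⟪b x, y₂⟫_ℝ)) / (2 * Real.sqrt ((⟪b x, y₁⟫_ℝ ^ 2 + g * ⟪b x, y₁⟫_ℝ * Real.sqrt (‖y₁‖ ^ 2 - ⟪b x, y₁⟫_ℝ ^ 2) + Real.sqrt (‖y₁‖ ^ 2 - ⟪b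 x, y₁⟫_ℝ ^ 2) ^ 2) * (⟪b x, y₂⟫_ℝ ^ 2 + g * ⟪b x, y₂⟫_ℝ * Real.sqrt (‖y₂‖ ^ 2 - ⟪b x, y₂⟫_ℝ ^ 2) + Real.sqrt (‖y₂‖ ^ 2 - ⟪b x, y₂⟫_ℝ ^ 2) ^ 2))))
          * (((2 * ⟪b x, y₁⟫_ℝ + g * Real.sqrt (‖y₁‖ ^ 2 - ⟪b x, y₁⟫_ℝ ^ 2)) * ((0 : V →L[ℝ] ℝ) (G x y₂ w)) + (g * ⟪b x, y₁⟫_ℝ + 2 * Real.sqrt (‖y₁‖ ^ 2 - ⟪b x, y₁⟫_ℝ ^ 2)) * ((0 : V →L[ℝ] ℝ) (G x y₂ w))) / (⟪b x, y₁⟫_ℝ ^ 2 + g * ⟪b x, y₁⟫_ℝ * Real.sqrt (‖y₁‖ ^ 2 - ⟪b x, y₁⟫_ℝ ^ 2) + Real.sqrt (‖y₁‖ ^ 2 - ⟪b x, y₁⟫_ℝ ^ 2) ^ 2)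
            + ((2 * ⟪b x, y₂⟫_ℝ + g * Real.sqrt (‖y₂‖ ^ 2 - ⟪b x, y₂⟫_ℝ ^ 2)) * ((innerSL ℝ (b x)) (G x y₂ w)) + (g * ⟪b x, y₂⟫_ℝ + 2 * Real.sqrt (‖y₂‖ ^ 2 - ⟪b x, y₂⟫_ℝ ^ 2)) * (((1 / (2 * Real.sqrt (‖y₂‖ ^ 2 - ⟪b x, y₂⟫_ℝ ^ 2))) • ((2 : ℝ) • innerSL ℝ y₂ - (2 * ⟪b x, y₂⟫_ℝ) • innerSL ℝ (b x))) (G x y₂ w))) / (⟪b x, y₂⟫_ℝ ^ 2 + g * ⟪b x, y₂⟫_ℝ * Real.sqrt (‖y₂‖ ^ 2 - ⟪b x, y₂⟫_ℝ ^ 2) + Real.sqrt (‖y₂‖ ^ 2 - ⟪b x, y₂⟫_ℝ ^ 2) ^ 2)) := by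
    rw [e3]
    exact keyD g h _ _ _ _ _ y₂ (hasFDerivAt_const ⟪b x, y₁⟫_ℝ y₂) hcy2
      (hasFDerivAt_const (Real.sqrt (‖y₁‖ ^ 2 - ⟪b x, y₁⟫_ℝ ^ 2)) y₂) hty2 hsy2 hB1pos hB2pos (G x y₂ w)
  rw [H1, H2, H3]
  have cm1 : ⟪y₁, b x⟫_ℝ = ⟪b x, y₁⟫_ℝ := real_inner_comm _ _
  have cm2 : ⟪y₂, b x⟫_ℝ = ⟪b x, y₂⟫_ℝ := real_inner_comm _ _
  have cm3 : ⟪y₂, y₁⟫_ℝ = ⟪y₁, y₂⟫_ℝ := real_inner_comm _ _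
  simp only [hG, hv, hq, ContinuousLinearMap.smul_apply, ContinuousLinearMap.sub_apply,
    ContinuousLinearMap.add_apply, ContinuousLinearMap.zero_apply,
    ContinuousLinearMap.coe_comp', Function.comp_apply, ContinuousLinearMap.coe_smul',
    Pi.smul_apply, innerSL_apply_apply, smul_eq_mul, hDb x hx,
    inner_add_right, inner_sub_right, real_inner_smul_right,
    inner_sub_left, real_inner_smul_left, inner_add_left,
    real_inner_self_eq_norm_sq, hbb, cm1, cm2, cm3]
  rw [hsq]
  set S₁ := Real.sqrt (‖y₁‖ ^ 2 - ⟪b x, y₁⟫_ℝ ^ 2) with hS₁def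
  set S₂ := Real.sqrt (‖y₂‖ ^ 2 - ⟪b x, y₂⟫_ℝ ^ 2) with hS₂def
  have hn₁ : ‖y₁‖ ^ 2 = S₁ ^ 2 + ⟪b x, y₁⟫_ℝ ^ 2 := by
    rw [hS₁def, Real.sq_sqrt hin1.le]; ring
  have hn₂ : ‖y₂‖ ^ 2 = S₂ ^ 2 + ⟪b x, y₂⟫_ℝ ^ 2 := by
    rw [hS₂def, Real.sq_sqrt hin2.le]; ring
  rw [hn₁, hn₂]
  generalize Real.sqrt ((⟪b x, y₁⟫_ℝ ^ 2 + g * ⟪b x, y₁⟫_ℝ * S₁ + S₁ ^ 2) * (⟪b x, y₂⟫_ℝ ^ 2 + g * ⟪b x, y₂⟫_ℝ * S₂ + S₂ ^ 2)) = D at hDDpos ⊢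
  have hD0 := hDDpos.ne'
  have hB₁' := hB1pos.ne'
  have hB₂' := hB2pos.ne'
  have hS₁' := hS1pos.ne'
  have hS₂' := hS2pos.ne'
  generalize hB1e : ⟪b x, y₁⟫_ℝ ^ 2 + g * ⟪b x, y₁⟫_ℝ * S₁ + S₁ ^ 2 = B1 at hB₁' ⊢
  generalize hB2e : ⟪b x, y₂⟫_ℝ ^ 2 + g * ⟪b x, y₂⟫_ℝ * S₂ + S₂ ^ 2 = B2 at hB₂' ⊢
  field_simp
  subst hB1e hB2e
  ring
end

section
/- Let V be a finite-dimensional real inner product space, U ⊆ V open, and let b : U → V be smooth with ‖b(x)‖ = 1 and Db(x)(u) = k(x)·(u − ⟨b(x),u⟩·b(x)) for a smooth k : U → ℝ (the flat Landsberg condition). Fix g ∈ ℝ with |g| < 2, set h = √(1 − g²/4), and define q, v, A, B, Λ as in the flat Finsleroid setting. Then for all x ∈ U, all y₁, y₂ with q(x,y₁) > 0 and q(x,y₂) > 0, and all w ∈ V: D_xΛ(x,y₁,y₂)(w) = k(x)·(c₁·⟨v(x,y₁),w⟩ + c₂·⟨v(x,y₂),w⟩), where c₁ = (g/(2q₁))·[(q₁q₂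 − b₁b₂ + (g/2)(q₁b₂ − q₂b₁))/√(B₁B₂) − Λ(q₁² − b₁²)/B₁] with qₐ = q(x,yₐ), bₐ = ⟨b(x),yₐ⟩, Bₐ = B(x,yₐ), Λ = Λ(x,y₁,y₂), and c₂ is obtained from c₁ by interchanging the subscripts 1 and 2. -/
open scoped InnerProductSpace

set_option maxHeartbeats 2000000 in
/-- In the flat Finsleroid setting with a unit axis vector field `b`
satisfying the Landsberg condition `Db(x)(u) = k(x)·(u − ⟨b(x),u⟩·b(x))`, the
`x`-derivative of the Finsleroid quantity `Λ` is given (formula (A.18) of the paper) by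
`D_xΛ(x,y₁,y₂)(w) = k(x)·(c₁·⟨v(x,y₁),w⟩ + c₂·⟨v(x,y₂),w⟩)`, where
`c₁ = (g/(2q₁))·[(q₁q₂ − b₁b₂ + (g/2)(q₁b₂ − q₂b₁))/√(B₁B₂) − Λ(q₁² − b₁²)/B₁]`
and `c₂` is obtained from `c₁` by interchanging the subscripts 1 and 2. -/
theorem finsleroid_lambda_x_derivative_landsberg
    {V : Type*} [NormedAddCommGroup V] [InnerProductSpace ℝ V] [FiniteDimensional ℝ V]
    (U : Set V) (hU : IsOpen U) (b : V → V) (k : V → ℝ)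
    (hbs : ContDiffOn ℝ (⊤ : ℕ∞) b U) (hks : ContDiffOn ℝ (⊤ : ℕ∞) k U)
    (hbnorm : ∀ x ∈ U, ‖b x‖ = 1)
    (hDb : ∀ x ∈ U, ∀ u : V, fderiv ℝ b x u = k x • (u - ⟪b x, u⟫_ℝ • b x))
    (g h : ℝ) (hg : |g| < 2) (hh : h = Real.sqrt (1 - g ^ 2 / 4))
    (q A B : V → V → ℝ) (v : V → V → V) (Lam : V → V → V → ℝ)
    (hq : ∀ x y : V, q x y = Real.sqrt (‖y‖ ^ 2 - ⟪b x, y⟫_ℝ ^ 2))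
    (hv : ∀ x y : V, v x y = y - ⟪b x, y⟫_ℝ • b x)
    (hA : ∀ x y : V, A x y = ⟪b x, y⟫_ℝ + (g / 2) * q x y)
    (hB : ∀ x y : V, B x y = ⟪b x, y⟫_ℝ ^ 2 + g * ⟪b x, y⟫_ℝ * q x y + q x y ^ 2)
    (hLam : ∀ x y₁ y₂ : V,
      Lam x y₁ y₂
        = (A x y₁ * A x y₂ + h ^ 2 * (⟪y₁, y₂⟫_ℝ - ⟪b x, y₁⟫_ℝ * ⟪b x, y₂⟫_ℝ))
          / Real.sqrt (B x y₁ * B x y₂)) :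
    ∀ x ∈ U, ∀ y₁ y₂ : V, 0 < q x y₁ → 0 < q x y₂ → ∀ w : V,
      fderiv ℝ (fun x' => Lam x' y₁ y₂) x w
        = k x
            * (((g / (2 * q x y₁))
                  * ((q x y₁ * q x y₂ - ⟪b x, y₁⟫_ℝ * ⟪b x, y₂⟫_ℝ
                        + (g / 2) * (q x y₁ * ⟪b x, y₂⟫_ℝ - q x y₂ * ⟪b x, y₁⟫_ℝ))
                        / Real.sqrt (B x y₁ * B x y₂)
                      - Lam x y₁ y₂ * (q x y₁ ^ 2 - ⟪b x, y₁⟫_ℝ ^ 2) / B x y₁))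
                  * ⟪v x y₁, w⟫_ℝ
              + ((g / (2 * q x y₂))
                  * ((q x y₂ * q x y₁ - ⟪b x, y₂⟫_ℝ * ⟪b x, y₁⟫_ℝ
                        + (g / 2) * (q x y₂ * ⟪b x, y₁⟫_ℝ - q x y₁ * ⟪b x, y₂⟫_ℝ))
                        / Real.sqrt (B x y₂ * B x y₁)
                      - Lam x y₁ y₂ * (q x y₂ ^ 2 - ⟪b x, y₂⟫_ℝ ^ 2) / B x y₂))
                  * ⟪v x y₂, w⟫_ℝ) := by
  intro x hx y₁ y₂ hq1 hq2 w
  have hg4 : g ^ 2 < 4 := by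
    have h1 := (abs_lt.mp hg).1
    have h2 := (abs_lt.mp hg).2
    nlinarith
  have hh2 : h ^ 2 = 1 - g ^ 2 / 4 := by
    rw [hh]; exact Real.sq_sqrt (by nlinarith)
  have hbd : DifferentiableAt ℝ b x :=
    (hbs.contDiffAt (hU.mem_nhds hx)).differentiableAt (by simp)
  -- derivative of x' ↦ ⟪b x', yᵢ⟫
  have hβ₁ : HasFDerivAt (fun x' => ⟪b x', y₁⟫_ℝ)
      (((innerSL ℝ).flip y₁).comp (fderiv ℝ b x)) x :=
    ((innerSL ℝ).flip y₁).hasFDerivAt.comp x hbd.hasFDerivAt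
  have hβ₂ : HasFDerivAt (fun x' => ⟪b x', y₂⟫_ℝ)
      (((innerSL ℝ).flip y₂).comp (fderiv ℝ b x)) x :=
    ((innerSL ℝ).flip y₂).hasFDerivAt.comp x hbd.hasFDerivAt
  have hr₁ : 0 < ‖y₁‖ ^ 2 - ⟪b x, y₁⟫_ℝ ^ 2 := by
    have := hq1; rw [hq] at this; exact Real.sqrt_pos.mp this
  have hr₂ : 0 < ‖y₂‖ ^ 2 - ⟪b x, y₂⟫_ℝ ^ 2 := by
    have := hq2; rw [hq] at this; exact Real.sqrt_pos.mp this
  have hq₁x : Real.sqrt (‖y₁‖ ^ 2 - ⟪b x, y₁⟫_ℝ ^ 2) = q x y₁ := (hq x y₁).symm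
  have hq₂x : Real.sqrt (‖y₂‖ ^ 2 - ⟪b x, y₂⟫_ℝ ^ 2) = q x y₂ := (hq x y₂).symm
  have hβ₁sq : HasFDerivAt (fun x' => ⟪b x', y₁⟫_ℝ ^ 2) _ x :=
    (hasDerivAt_pow 2 _).comp_hasFDerivAt x hβ₁
  have hβ₂sq : HasFDerivAt (fun x' => ⟪b x', y₂⟫_ℝ ^ 2) _ x :=
    (hasDerivAt_pow 2 _).comp_hasFDerivAt x hβ₂
  have hQ₁ : HasFDerivAt (fun x' => Real.sqrt (‖y₁‖ ^ 2 - ⟪b x', y₁⟫_ℝ ^ 2)) _ x :=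
    ((hasFDerivAt_const (‖y₁‖ ^ 2) x).sub hβ₁sq).sqrt (ne_of_gt hr₁)
  have hQ₂ : HasFDerivAt (fun x' => Real.sqrt (‖y₂‖ ^ 2 - ⟪b x', y₂⟫_ℝ ^ 2)) _ x :=
    ((hasFDerivAt_const (‖y₂‖ ^ 2) x).sub hβ₂sq).sqrt (ne_of_gt hr₂)
  have hQ₁sq : HasFDerivAt (fun x' => Real.sqrt (‖y₁‖ ^ 2 - ⟪b x', y₁⟫_ℝ ^ 2) ^ 2) _ x :=
    (hasDerivAt_pow 2 _).comp_hasFDerivAt x hQ₁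
  have hQ₂sq : HasFDerivAt (fun x' => Real.sqrt (‖y₂‖ ^ 2 - ⟪b x', y₂⟫_ℝ ^ 2) ^ 2) _ x :=
    (hasDerivAt_pow 2 _).comp_hasFDerivAt x hQ₂
  have hA₁ : HasFDerivAt
      (fun x' => ⟪b x', y₁⟫_ℝ + g / 2 * Real.sqrt (‖y₁‖ ^ 2 - ⟪b x', y₁⟫_ℝ ^ 2)) _ x :=
    hβ₁.add (hQ₁.const_mul (g / 2))
  have hA₂ : HasFDerivAt
      (fun x' => ⟪b x', y₂⟫_ℝ + g / 2 * Real.sqrt (‖y₂‖ ^ 2 - ⟪b x', y₂⟫_ℝ ^ 2)) _ x :=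
    hβ₂.add (hQ₂.const_mul (g / 2))
  have hB₁ : HasFDerivAt
      (fun x' => ⟪b x', y₁⟫_ℝ ^ 2
        + g * ⟪b x', y₁⟫_ℝ * Real.sqrt (‖y₁‖ ^ 2 - ⟪b x', y₁⟫_ℝ ^ 2)
        + Real.sqrt (‖y₁‖ ^ 2 - ⟪b x', y₁⟫_ℝ ^ 2) ^ 2) _ x :=
    (hβ₁sq.add ((hβ₁.const_mul g).mul hQ₁)).add hQ₁sq
  have hB₂ : HasFDerivAt
      (fun x' => ⟪b x', y₂⟫_ℝ ^ 2
        + g * ⟪b x', y₂⟫_ℝ * Real.sqrt (‖y₂‖ ^ 2 - ⟪b x', y₂⟫_ℝ ^ 2)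
        + Real.sqrt (‖y₂‖ ^ 2 - ⟪b x', y₂⟫_ℝ ^ 2) ^ 2) _ x :=
    (hβ₂sq.add ((hβ₂.const_mul g).mul hQ₂)).add hQ₂sq
  have hB₁pos : 0 < ⟪b x, y₁⟫_ℝ ^ 2
      + g * ⟪b x, y₁⟫_ℝ * Real.sqrt (‖y₁‖ ^ 2 - ⟪b x, y₁⟫_ℝ ^ 2)
      + Real.sqrt (‖y₁‖ ^ 2 - ⟪b x, y₁⟫_ℝ ^ 2) ^ 2 := by
    rw [hq₁x]
    nlinarith [sq_nonneg (2 * ⟪b x, y₁⟫_ℝ + g * q x y₁), mul_pos hq1 hq1]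
  have hB₂pos : 0 < ⟪b x, y₂⟫_ℝ ^ 2
      + g * ⟪b x, y₂⟫_ℝ * Real.sqrt (‖y₂‖ ^ 2 - ⟪b x, y₂⟫_ℝ ^ 2)
      + Real.sqrt (‖y₂‖ ^ 2 - ⟪b x, y₂⟫_ℝ ^ 2) ^ 2 := by
    rw [hq₂x]
    nlinarith [sq_nonneg (2 * ⟪b x, y₂⟫_ℝ + g * q x y₂), mul_pos hq2 hq2]
  have hN : HasFDerivAt
      (fun x' =>
        (⟪b x', y₁⟫_ℝ + g / 2 * Real.sqrt (‖y₁‖ ^ 2 - ⟪b x', y₁⟫_ℝ ^ 2))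
          * (⟪b x', y₂⟫_ℝ + g / 2 * Real.sqrt (‖y₂‖ ^ 2 - ⟪b x', y₂⟫_ℝ ^ 2))
        + h ^ 2 * (⟪y₁, y₂⟫_ℝ - ⟪b x', y₁⟫_ℝ * ⟪b x', y₂⟫_ℝ)) _ x :=
    (hA₁.mul hA₂).add
      (((hasFDerivAt_const (⟪y₁, y₂⟫_ℝ) x).sub (hβ₁.mul hβ₂)).const_mul (h ^ 2))
  have hden : HasFDerivAt
      (fun x' => Real.sqrt
        ((⟪b x', y₁⟫_ℝ ^ 2
            + g * ⟪b x', y₁⟫_ℝ * Real.sqrt (‖y₁‖ ^ 2 - ⟪b x', y₁⟫_ℝ ^ 2)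
            + Real.sqrt (‖y₁‖ ^ 2 - ⟪b x', y₁⟫_ℝ ^ 2) ^ 2)
          * (⟪b x', y₂⟫_ℝ ^ 2
            + g * ⟪b x', y₂⟫_ℝ * Real.sqrt (‖y₂‖ ^ 2 - ⟪b x', y₂⟫_ℝ ^ 2)
            + Real.sqrt (‖y₂‖ ^ 2 - ⟪b x', y₂⟫_ℝ ^ 2) ^ 2))) _ x :=
    (hB₁.mul hB₂).sqrt (ne_of_gt (mul_pos hB₁pos hB₂pos))
  have hSpos : 0 < Real.sqrt
      ((⟪b x, y₁⟫_ℝ ^ 2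
          + g * ⟪b x, y₁⟫_ℝ * Real.sqrt (‖y₁‖ ^ 2 - ⟪b x, y₁⟫_ℝ ^ 2)
          + Real.sqrt (‖y₁‖ ^ 2 - ⟪b x, y₁⟫_ℝ ^ 2) ^ 2)
        * (⟪b x, y₂⟫_ℝ ^ 2
          + g * ⟪b x, y₂⟫_ℝ * Real.sqrt (‖y₂‖ ^ 2 - ⟪b x, y₂⟫_ℝ ^ 2)
          + Real.sqrt (‖y₂‖ ^ 2 - ⟪b x, y₂⟫_ℝ ^ 2) ^ 2)) :=
    Real.sqrt_pos.mpr (mul_pos hB₁pos hB₂pos)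
  have hinv : HasFDerivAt
      (fun x' => (Real.sqrt
        ((⟪b x', y₁⟫_ℝ ^ 2
            + g * ⟪b x', y₁⟫_ℝ * Real.sqrt (‖y₁‖ ^ 2 - ⟪b x', y₁⟫_ℝ ^ 2)
            + Real.sqrt (‖y₁‖ ^ 2 - ⟪b x', y₁⟫_ℝ ^ 2) ^ 2)
          * (⟪b x', y₂⟫_ℝ ^ 2
            + g * ⟪b x', y₂⟫_ℝ * Real.sqrt (‖y₂‖ ^ 2 - ⟪b x', y₂⟫_ℝ ^ 2)
            + Real.sqrt (‖y₂‖ ^ 2 - ⟪b x', y₂⟫_ℝ ^ 2) ^ 2)))⁻¹) _ x :=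
    (hasDerivAt_inv (ne_of_gt hSpos)).comp_hasFDerivAt x hden
  have hLamD : HasFDerivAt (fun x' => Lam x' y₁ y₂) _ x :=
    (hN.mul hinv).congr_of_eventuallyEq (Filter.Eventually.of_forall fun x' => by
      show Lam x' y₁ y₂ = _
      rw [hLam x' y₁ y₂, hA x' y₁, hA x' y₂, hB x' y₁, hB x' y₂, hq x' y₁, hq x' y₂,
        div_eq_mul_inv]; rfl)
  rw [hLamD.fderiv]
  simp only [ContinuousLinearMap.add_apply, ContinuousLinearMap.smul_apply,
    ContinuousLinearMap.sub_apply, ContinuousLinearMap.coe_comp', Function.comp_apply,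
    ContinuousLinearMap.zero_apply, ContinuousLinearMap.flip_apply, innerSL_apply_apply,
    ContinuousLinearMap.neg_apply, smul_eq_mul, pow_one, Nat.cast_ofNat, Pi.sub_apply, Pi.mul_apply]
  clear hLamD hN hinv hden hB₁ hB₂ hQ₁ hQ₂ hQ₁sq hQ₂sq hA₁ hA₂ hβ₁ hβ₂ hβ₁sq hβ₂sq hB₁pos hB₂pos hSpos hbd hbs hks hbnorm
  have ht₁ : ⟪(fderiv ℝ b x) w, y₁⟫_ℝ = k x * ⟪v x y₁, w⟫_ℝ := by
    rw [hDb x hx w, hv x y₁]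
    simp only [inner_sub_left, inner_sub_right, real_inner_smul_left, real_inner_smul_right]
    rw [real_inner_comm w y₁]
    ring
  have ht₂ : ⟪(fderiv ℝ b x) w, y₂⟫_ℝ = k x * ⟪v x y₂, w⟫_ℝ := by
    rw [hDb x hx w, hv x y₂]
    simp only [inner_sub_left, inner_sub_right, real_inner_smul_left, real_inner_smul_right]
    rw [real_inner_comm w y₂]
    ring
  rw [ht₁, ht₂, hq₁x, hq₂x, hLam x y₁ y₂, hA x y₁, hA x y₂,
    show Real.sqrt (B x y₂ * B x y₁) = Real.sqrt (B x y₁ * B x y₂) from by rw [mul_comm],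
    hB x y₁, hB x y₂, hh2]
  set a₁ := ⟪b x, y₁⟫_ℝ with ha₁
  set a₂ := ⟪b x, y₂⟫_ℝ with ha₂
  set p₁ := q x y₁ with hp₁
  set p₂ := q x y₂ with hp₂
  set u₁ := ⟪v x y₁, w⟫_ℝ with hu₁
  set u₂ := ⟪v x y₂, w⟫_ℝ with hu₂
  set P := ⟪y₁, y₂⟫_ℝ with hP
  set K := k x with hK
  have hb1 : 0 < a₁ ^ 2 + g * a₁ * p₁ + p₁ ^ 2 := by
    nlinarith [sq_nonneg (2 * a₁ + g * p₁), mul_pos hq1 hq1]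
  have hb2 : 0 < a₂ ^ 2 + g * a₂ * p₂ + p₂ ^ 2 := by
    nlinarith [sq_nonneg (2 * a₂ + g * p₂), mul_pos hq2 hq2]
  set S := Real.sqrt ((a₁ ^ 2 + g * a₁ * p₁ + p₁ ^ 2) * (a₂ ^ 2 + g * a₂ * p₂ + p₂ ^ 2))
    with hSdef
  have hS0 : 0 < S := by rw [hSdef]; exact Real.sqrt_pos.mpr (mul_pos hb1 hb2)
  have hS2 : S ^ 2 = (a₁ ^ 2 + g * a₁ * p₁ + p₁ ^ 2) * (a₂ ^ 2 + g * a₂ * p₂ + p₂ ^ 2) := by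
    rw [hSdef]; exact Real.sq_sqrt (mul_pos hb1 hb2).le
  have hp₁0 : p₁ ≠ 0 := ne_of_gt hq1
  have hp₂0 : p₂ ≠ 0 := ne_of_gt hq2
  have hb1' : a₁ ^ 2 + g * a₁ * p₁ + p₁ ^ 2 ≠ 0 := ne_of_gt hb1
  have hb2' : a₂ ^ 2 + g * a₂ * p₂ + p₂ ^ 2 ≠ 0 := ne_of_gt hb2
  have hS0' : S ≠ 0 := ne_of_gt hS0
  trans ((1 / S) *
    (K * ((g / (2 * p₁)) *
            ((p₁ * p₂ - a₁ * a₂ + g / 2 * (p₁ * a₂ - p₂ * a₁))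
              - ((a₁ + g / 2 * p₁) * (a₂ + g / 2 * p₂) + (1 - g ^ 2 / 4) * (P - a₁ * a₂))
                  * (p₁ ^ 2 - a₁ ^ 2) / (a₁ ^ 2 + g * a₁ * p₁ + p₁ ^ 2)) * u₁
        + (g / (2 * p₂)) *
            ((p₂ * p₁ - a₂ * a₁ + g / 2 * (p₂ * a₁ - p₁ * a₂))
              - ((a₁ + g / 2 * p₁) * (a₂ + g / 2 * p₂) + (1 - g ^ 2 / 4) * (P - a₁ * a₂))
                  * (p₂ ^ 2 - a₂ ^ 2) / (a₂ ^ 2 + g * a₂ * p₂ + p₂ ^ 2)) * u₂)))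
  · rw [hS2]
    have hb1'' : a₁ * (a₁ + g * p₁) + p₁ ^ 2 ≠ 0 := by convert hb1' using 1; ring
    have hb2'' : a₂ * (a₂ + g * p₂) + p₂ ^ 2 ≠ 0 := by convert hb2' using 1; ring
    simp only [Nat.reduceSub, pow_one]
    field_simp
    ring
  · field_simp
end
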